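/- Let G be a finite group. If m denotes the maximum order of an element of G, then m ≤ |G| − λ(G) + 1, where λ(G) is the number of maximal cyclic subgroups of G. -/

import Mathlib

/-- A subgroup is maximal cyclic if it is cyclic and not properly contained
in any cyclic subgroup. -/
def IsMaximalCyclic {G : Type*} [Group G] (H : Subgroup G) : Prop :=
  IsCyclic H ∧ ∀ K : Subgroup G, IsCyclic K → H ≤ K → H = K

/-- `lambdaCover G` is the number of maximal cyclic subgroups of `G`. -/
noncomputable def lambdaCover (G : Type*) [Group G] : ℕ :=
  Nat.card {H : Subgroup G // IsMaximalCyclic H}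

/-- A cyclic subgroup is generated by some element. -/
lemma exists_zpowers_eq {G : Type*} [Group G] (H : Subgroup G) (h : IsCyclic H) :
    ∃ x : G, Subgroup.zpowers x = H := by
  obtain ⟨⟨x, hx⟩, hgen⟩ := h
  refine ⟨x, le_antisymm ?_ ?_⟩
  · rw [Subgroup.zpowers_le]; exact hx
  · intro y hy
    obtain ⟨n, hn⟩ := hgen ⟨y, hy⟩
    exact ⟨n, congrArg Subtype.val hn⟩

lemma zpowersCyclic {G : Type*} [Group G] (g : G) : IsCyclic (Subgroup.zpowers g) := by
  constructor
  refine ⟨⟨g, Subgroup.mem_zpowers g⟩, ?_⟩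
  rintro ⟨x, n, rfl⟩
  exact ⟨n, Subtype.ext (by simp)⟩

theorem max_order_le {G : Type*} [Group G] [Finite G] (m : ℕ)
    (hm : IsGreatest {n | ∃ g : G, orderOf g = n} m) :
    m + lambdaCover G ≤ Nat.card G + 1 := by
  classical
  obtain ⟨⟨g, hg⟩, hub⟩ := hm
  set zg := Subgroup.zpowers g with hzg
  have hcard : Nat.card zg = m := by rw [Nat.card_zpowers, hg]
  -- any cyclic subgroup has card ≤ m
  have hle : ∀ K : Subgroup G, IsCyclic K → Nat.card K ≤ m := by
    intro K hK
    obtain ⟨x, hx⟩ := exists_zpowers_eq K hK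
    rw [← hx, Nat.card_zpowers]
    exact hub ⟨x, rfl⟩
  -- zg is maximal cyclic
  have hmax : IsMaximalCyclic zg := by
    refine ⟨zpowersCyclic g, fun K hK hKle => ?_⟩
    have h1 : Nat.card K ≤ Nat.card zg := hcard ▸ hle K hK
    apply SetLike.coe_injective
    exact Set.eq_of_subset_of_ncard_le hKle
      (by rw [← Nat.card_coe_set_eq, ← Nat.card_coe_set_eq]; exact h1)
      (Set.toFinite _)
  -- choose a generator for each maximal cyclic subgroup
  have hgen : ∀ H : {H : Subgroup G // IsMaximalCyclic H}, ∃ x : G,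
      Subgroup.zpowers x = H.1 := fun H => exists_zpowers_eq H.1 H.2.1
  choose gen hgenspec using hgen
  -- injection from maximal cyclic subgroups into {x ∉ zg} ⊕ Unit
  have hinj : Function.Injective (fun H : {H : Subgroup G // IsMaximalCyclic H} =>
      if h : H.1 = zg then Sum.inr () else
        Sum.inl (⟨gen H, by
          intro hmem
          apply h
          have h1 : H.1 ≤ zg := by
            rw [← hgenspec H, Subgroup.zpowers_le]; exact hmem
          exact H.2.2 zg (zpowersCyclic g) h1⟩ :
          {x : G // x ∉ zg}) : _ → {x : G // x ∉ zg} ⊕ Unit) := by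
    intro H1 H2 heq
    by_cases h1 : H1.1 = zg <;> by_cases h2 : H2.1 = zg <;>
      simp only [h1, h2, dif_pos, dif_neg, not_false_iff] at heq
    · exact Subtype.ext (h1.trans h2.symm)
    · exact absurd heq (by simp)
    · exact absurd heq (by simp)
    · apply Subtype.ext
      have : gen H1 = gen H2 := congrArg Subtype.val (Sum.inl.inj heq)
      rw [← hgenspec H1, ← hgenspec H2, this]
  have hlam : lambdaCover G ≤ Nat.card {x : G // x ∉ zg} + 1 := by
    have := Nat.card_le_card_of_injective _ hinj
    simpa [Nat.card_sum, lambdaCover] using this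
  have hcompl : Nat.card {x : G // x ∉ zg} + m = Nat.card G := by
    have h1 : ((zg : Set G)ᶜ).ncard + (zg : Set G).ncard = Nat.card G := by
      rw [add_comm]; exact Set.ncard_add_ncard_compl _
    have h2 : Nat.card {x : G // x ∉ zg} = ((zg : Set G)ᶜ).ncard := by
      rw [← Nat.card_coe_set_eq]; rfl
    have h3 : (zg : Set G).ncard = m := by rw [← Nat.card_coe_set_eq]; exact hcard
    omega
  omega
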